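/- arXiv:1404.1168 — 4 statements merged into one kernel-verified Lean document; each statement's English description precedes it below -/
import Mathlib

section
/- Let x : ℝ → (Fin n → ℝ) and v : ℝ → ℝ, and let α₁, α₂, α₃, δ be strictly positive constants with α₃ < α₂. Assume: (i) α₁·‖x(t)‖² ≤ v(t) ≤ α₂·‖x(t)‖² for all t ≥ 0; (ii) v is nonincreasing on [0, ∞); (iii) v(t + δ) − v(t) ≤ −α₃·‖x(t)‖² for all t ≥ 0. Then for all t ≥ t₀ ≥ 0, v(t) ≤ m_v·exp(−α_v·(t − t₀))·v(t₀), where m_v = 1/(1 − α₃/α₂) and α_v = (1/δ)·log(1/(1 − α₃/α₂)); consequently ‖x(t)‖ ≤ sqrt((α₂/α₁)·m_v)·exp(−(α_v/2)·(t − t₀))·‖x(t₀)‖, so x(t) converges exponentially to 0. -/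
/-! With `ρ = 1 - α₃/α₂`, the upper bound `v ≤ α₂‖x‖²` turns the window decrease into the
contraction `v(s + δ) ≤ ρ v(s)`, so `v(t₀ + kδ) ≤ ρᵏ v(t₀)`. Monotonicity of `v` fills the gaps
between the grid points at the cost of one factor `ρ⁻¹ = m_v`, and `ρ^((t - t₀)/δ)` is exactly
`exp(-α_v (t - t₀))`. The quadratic bounds on `v` then transfer the decay to `‖x‖`, halving the
rate under the square root. -/

/-- Euclidean norm of a vector. -/
noncomputable def euclNorm {α : Type*} [Fintype α] (v : α → ℝ) : ℝ :=
  Real.sqrt (∑ i, v i ^ 2)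

open Real Set

section GeometricDecay

variable {v : ℝ → ℝ} {ρ δ t₀ : ℝ}

theorem le_pow_mul_of_le_mul_add (hρ : 0 ≤ ρ) (hδ : 0 ≤ δ)
    (hstep : ∀ s ≥ t₀, v (s + δ) ≤ ρ * v s) (k : ℕ) :
    v (t₀ + k * δ) ≤ ρ ^ k * v t₀ := by
  induction k with
  | zero => simp
  | succ k ih =>
    calc v (t₀ + (k + 1 : ℕ) * δ) = v (t₀ + k * δ + δ) := by push_cast; ring_nf
      _ ≤ ρ * v (t₀ + k * δ) := hstep _ (le_add_of_nonneg_right (by positivity))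
      _ ≤ ρ * (ρ ^ k * v t₀) := mul_le_mul_of_nonneg_left ih hρ
      _ = ρ ^ (k + 1) * v t₀ := by ring

theorem pow_floor_le_inv_mul_rpow (hρ₀ : 0 < ρ) (hρ₁ : ρ ≤ 1) (s : ℝ) :
    ρ ^ ⌊s⌋₊ ≤ ρ⁻¹ * ρ ^ s := by
  have h := rpow_le_rpow_of_exponent_ge hρ₀ hρ₁ (Nat.lt_floor_add_one s).le
  rw [rpow_add_one hρ₀.ne', rpow_natCast] at h
  rw [le_inv_mul_iff₀ hρ₀]
  linarith

theorem AntitoneOn.le_inv_mul_rpow_mul (hmono : AntitoneOn v (Ici t₀)) (hρ₀ : 0 < ρ)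
    (hρ₁ : ρ ≤ 1) (hδ : 0 < δ) (hstep : ∀ s ≥ t₀, v (s + δ) ≤ ρ * v s) (hv : 0 ≤ v t₀)
    {t : ℝ} (ht : t₀ ≤ t) :
    v t ≤ ρ⁻¹ * ρ ^ ((t - t₀) / δ) * v t₀ := by
  set k := ⌊(t - t₀) / δ⌋₊
  have hk : t₀ + k * δ ≤ t := by
    have h := Nat.floor_le (div_nonneg (sub_nonneg.2 ht) hδ.le)
    rw [le_div_iff₀ hδ] at h
    linarith
  have hk₀ : t₀ ≤ t₀ + k * δ := le_add_of_nonneg_right (by positivity)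
  calc v t ≤ v (t₀ + k * δ) := hmono hk₀ (hk₀.trans hk) hk
    _ ≤ ρ ^ k * v t₀ := le_pow_mul_of_le_mul_add hρ₀.le hδ.le hstep k
    _ ≤ ρ⁻¹ * ρ ^ ((t - t₀) / δ) * v t₀ :=
      mul_le_mul_of_nonneg_right (pow_floor_le_inv_mul_rpow hρ₀ hρ₁ _) hv

end GeometricDecay

theorem le_one_sub_div_mul_of_sub_le_neg_mul {V V' q α₂ α₃ : ℝ} (h₂ : 0 < α₂) (h₃ : 0 ≤ α₃)
    (hub : V ≤ α₂ * q) (hdec : V' - V ≤ -α₃ * q) :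
    V' ≤ (1 - α₃ / α₂) * V := by
  have h : α₃ / α₂ * V ≤ α₃ * q := by
    calc α₃ / α₂ * V ≤ α₃ / α₂ * (α₂ * q) := mul_le_mul_of_nonneg_left hub (by positivity)
      _ = α₃ * q := by field_simp
  linarith

theorem exp_neg_one_div_mul_log_one_div_mul {ρ : ℝ} (hρ : 0 < ρ) (δ τ : ℝ) :
    exp (-((1 / δ) * log (1 / ρ)) * τ) = ρ ^ (τ / δ) := by
  rw [rpow_def_of_pos hρ, one_div ρ, log_inv]
  ring_nf

theorem sq_le_mul_sq_of_quadratic_bounds {a b V W α₁ α₂ C : ℝ} (h₁ : 0 < α₁) (hC : 0 ≤ C)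
    (hlb : α₁ * a ^ 2 ≤ V) (hVW : V ≤ C * W) (hub : W ≤ α₂ * b ^ 2) :
    a ^ 2 ≤ α₂ / α₁ * C * b ^ 2 := by
  have h := mul_le_mul_of_nonneg_left hub hC
  rw [div_mul_eq_mul_div, div_mul_eq_mul_div, le_div_iff₀ h₁]
  linarith

theorem le_sqrt_mul_of_sq_le_mul_sq {a b c : ℝ} (hb : 0 ≤ b) (h : a ^ 2 ≤ c * b ^ 2) :
    a ≤ √c * b := by
  calc a ≤ √(c * b ^ 2) := (le_abs_self a).trans (abs_le_sqrt h)
    _ = √c * b := by rw [sqrt_mul' c (sq_nonneg b), sqrt_sq hb]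

/-- Exponential stability criterion (Sastry–Bodson): a Lyapunov-like function that is
quadratically bounded, nonincreasing, and decreases by a fixed quadratic amount over
every window of length `δ` forces exponential decay with explicit rate and overshoot. -/
theorem stmt5 (n : ℕ) (x : ℝ → Fin n → ℝ) (v : ℝ → ℝ)
    (α₁ α₂ α₃ δ : ℝ) (h₁ : 0 < α₁) (h₂ : 0 < α₂) (h₃ : 0 < α₃) (hδ : 0 < δ)
    (h₃₂ : α₃ < α₂)
    (hlb : ∀ t : ℝ, 0 ≤ t → α₁ * euclNorm (x t) ^ 2 ≤ v t)
    (hub : ∀ t : ℝ, 0 ≤ t → v t ≤ α₂ * euclNorm (x t) ^ 2)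
    (hmono : AntitoneOn v (Set.Ici (0 : ℝ)))
    (hdec : ∀ t : ℝ, 0 ≤ t → v (t + δ) - v t ≤ -α₃ * euclNorm (x t) ^ 2) :
    ∀ t₀ t : ℝ, 0 ≤ t₀ → t₀ ≤ t →
      v t ≤ (1 / (1 - α₃ / α₂)) *
          Real.exp (-((1 / δ) * Real.log (1 / (1 - α₃ / α₂))) * (t - t₀)) * v t₀ ∧
      euclNorm (x t) ≤
        Real.sqrt ((α₂ / α₁) * (1 / (1 - α₃ / α₂))) *
          Real.exp (-(((1 / δ) * Real.log (1 / (1 - α₃ / α₂))) / 2) * (t - t₀)) *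
            euclNorm (x t₀) := by
  intro t₀ t ht₀ ht
  set ρ := 1 - α₃ / α₂
  have hρ₀ : 0 < ρ := sub_pos.2 ((div_lt_one h₂).2 h₃₂)
  have hρ₁ : ρ ≤ 1 := sub_le_self _ (div_pos h₃ h₂).le
  have hstep : ∀ s ≥ t₀, v (s + δ) ≤ ρ * v s := fun s hs =>
    le_one_sub_div_mul_of_sub_le_neg_mul h₂ h₃.le (hub s (ht₀.trans hs)) (hdec s (ht₀.trans hs))
  have hv : v t ≤ 1 / ρ * exp (-((1 / δ) * log (1 / ρ)) * (t - t₀)) * v t₀ := by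
    rw [exp_neg_one_div_mul_log_one_div_mul hρ₀, one_div ρ]
    exact (hmono.mono (Ici_subset_Ici.2 ht₀)).le_inv_mul_rpow_mul hρ₀ hρ₁ hδ hstep
      ((hlb t₀ ht₀).trans' (by positivity)) ht
  refine ⟨hv, ?_⟩
  have hsq := sq_le_mul_sq_of_quadratic_bounds h₁ (by positivity) (hlb t (ht₀.trans ht)) hv
    (hub t₀ ht₀)
  calc euclNorm (x t)
      ≤ √(α₂ / α₁ * (1 / ρ * exp (-((1 / δ) * log (1 / ρ)) * (t - t₀)))) * euclNorm (x t₀) :=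
        le_sqrt_mul_of_sq_le_mul_sq (sqrt_nonneg _) hsq
    _ = _ := by
        rw [← mul_assoc, sqrt_mul (by positivity), ← exp_half]
        ring_nf
end

section
/- Let p ≥ 1, k > 0, let Λ be a p × p real diagonal matrix with strictly positive diagonal entries, Γ a p × p real orthogonal matrix, T a real p × (m − p) matrix and R = [1 | T]. Let W : ℝ → Matrix (Fin m) (Fin m) ℝ be continuous with W(t) positive semidefinite diagonal, and suppose there are T₀ > 0 and 0 < μ₁ ≤ μ₂ with μ₁ • 1 ≤ ∫_t^{t+T₀} (R ⬝ W(τ) ⬝ Rᵀ) dτ ≤ μ₂ • 1 in the Loewner order for all t ≥ 0. Set A(t) = −k • (Λ ⬝ Γᵀ ⬝ R ⬝ W(t) ⬝ Rᵀ ⬝ Γ). Then for every t₀ ≥ 0 and every differentiable solution y of y'(t) = A(t).mulVec(y t), one has μ̃₁·‖y(t₀)‖² ≤ ∫_{t₀}^{t₀+T₀} ‖(W(τ)^{1/2} ⬝ Rᵀ ⬝ Γ).mulVec(y τ)‖² dτ ≤ μ̃₂·‖y(t₀)‖², where μ̃₁ = μ₁/(1 + k·√p·‖Λ‖·μ₂)²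 and μ̃₂ = μ₂·exp(k²·p·‖Λ‖²·μ₂²), ‖Λ‖ denoting the operator norm and W(τ)^{1/2} the positive semidefinite square root of W(τ). -/
open MeasureTheory Matrix

/-- Entrywise interval integral of a matrix-valued function. -/
noncomputable def intMat {α β : Type*} (f : ℝ → Matrix α β ℝ) (a b : ℝ) : Matrix α β ℝ :=
  Matrix.of fun i j => ∫ τ in a..b, f τ i j

/-- Loewner order: `A ≤ B` iff `B - A` is positive semidefinite. -/
def loewnerLE {α : Type*} [Fintype α] (A B : Matrix α α ℝ) : Prop := (B - A).PosSemidef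

/-- Euclidean (ℓ²-ℓ²) operator norm of a matrix. -/
noncomputable def matOpNorm {α β : Type*} [Fintype α] [Fintype β] (A : Matrix α β ℝ) : ℝ :=
  sSup {r : ℝ | ∃ v : β → ℝ, euclNorm v ≤ 1 ∧ r = euclNorm (A.mulVec v)}

open scoped ComplexOrder in
/-- The positive semidefinite square root of a positive semidefinite matrix
(the definition `Matrix.PosSemidef.sqrt` of the older Mathlib, removed since). -/
noncomputable def Matrix.PosSemidef.sqrt {n 𝕜 : Type*} [Fintype n] [DecidableEq n] [RCLike 𝕜]
    {A : Matrix n n 𝕜} (hA : A.PosSemidef) : Matrix n n 𝕜 :=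
  hA.1.eigenvectorUnitary.1 * diagonal ((↑) ∘ (√·) ∘ hA.1.eigenvalues) *
  (star hA.1.eigenvectorUnitary : Matrix n n 𝕜)

/-!
Write `S = Γᵀ R W Rᵀ Γ = Cᵀ C`, so that the output energy is `J = ∫ yᵀ S y`, and let
`G = ∫ y(t₀)ᵀ S y(t₀)` be the energy of the frozen initial state; persistency of excitation says
`μ₁ |y(t₀)|² ≤ G ≤ μ₂ |y(t₀)|²`.

Upper bound: `(y - y(t₀))ᵀ Λ⁻¹ (y - y(t₀))` is a Lyapunov function with derivative
`-2k (y - y(t₀))ᵀ S y`, so `J ≤ ∫ y(t₀)ᵀ S y ≤ √G √J` by Cauchy–Schwarz, i.e. `J ≤ G`.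

Lower bound: the triangle inequality for the seminorm `u ↦ √(∫ uᵀ S u)` gives `√G ≤ √J + √H`
with `H = ∫ zᵀ S z`, `z = y - y(t₀)`. Integrating by parts against the tail Gramian
`∫_t^{t₀+T₀} S ≤ μ₂` gives `H ≤ μ₂ (∫ |ẏ|)²`, and `|ẏ| ≤ k ‖Λ‖ √(tr S) √(yᵀ S y)` together with
`∫ tr S ≤ p μ₂` gives `∫ |ẏ| ≤ k ‖Λ‖ √(p μ₂) √J`. Hence `√G ≤ (1 + k √p ‖Λ‖ μ₂) √J`.
-/

section Euclidean

variable {ι : Type*} [Fintype ι]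

lemma euclNorm_eq_norm_toLp (v : ι → ℝ) : euclNorm v = ‖WithLp.toLp 2 v‖ := by
  simp [euclNorm, EuclideanSpace.norm_eq]

lemma euclNorm_nonneg (v : ι → ℝ) : 0 ≤ euclNorm v := Real.sqrt_nonneg _

lemma euclNorm_smul (c : ℝ) (v : ι → ℝ) : euclNorm (c • v) = |c| * euclNorm v := by
  simp only [euclNorm_eq_norm_toLp, WithLp.toLp_smul, norm_smul, Real.norm_eq_abs]

lemma euclNorm_sq (v : ι → ℝ) : euclNorm v ^ 2 = v ⬝ᵥ v := by
  rw [euclNorm, Real.sq_sqrt (by positivity)]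
  simp [dotProduct, sq]

lemma euclNorm_eq_sqrt_dotProduct (v : ι → ℝ) : euclNorm v = √(v ⬝ᵥ v) := by
  simp [euclNorm, dotProduct, sq]

lemma continuous_euclNorm : Continuous (euclNorm : (ι → ℝ) → ℝ) := by
  simp only [funext euclNorm_eq_norm_toLp]
  exact continuous_norm.comp (PiLp.continuous_toLp 2 _)

lemma euclNorm_sub_le_integral {f f' : ℝ → ι → ℝ} {a b : ℝ} (hab : a ≤ b)
    (hf : ∀ t, HasDerivAt f (f' t) t) (hf' : Continuous f') :
    euclNorm (f b - f a) ≤ ∫ t in a..b, euclNorm (f' t) := by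
  rw [← intervalIntegral.integral_eq_sub_of_hasDerivAt (fun t _ => hf t)
    (hf'.intervalIntegrable a b), euclNorm_eq_norm_toLp]
  have hcomm : WithLp.toLp 2 (∫ t in a..b, f' t) = ∫ t in a..b, WithLp.toLp 2 (f' t) :=
    ((PiLp.continuousLinearEquiv 2 ℝ _).symm.toContinuousLinearMap.intervalIntegral_comp_comm
      (hf'.intervalIntegrable a b)).symm
  simp only [euclNorm_eq_norm_toLp, hcomm]
  exact intervalIntegral.norm_integral_le_integral_norm hab

end Euclidean

section OperatorNorm

variable {α β : Type*} [Fintype α] [Fintype β]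

lemma matOpNorm_eq_norm [DecidableEq β] (A : Matrix α β ℝ) :
    matOpNorm A = ‖(toLpLin 2 2 A).toContinuousLinearMap‖ := by
  rw [← ContinuousLinearMap.sSup_unitClosedBall_eq_norm, matOpNorm]
  congr 1
  ext r
  simp only [Set.mem_ofPred_eq, Set.mem_image, Metric.mem_closedBall, dist_zero_right]
  constructor
  · rintro ⟨v, hv, rfl⟩
    exact ⟨WithLp.toLp 2 v, by rwa [← euclNorm_eq_norm_toLp],
      by simp [euclNorm_eq_norm_toLp, toLpLin_apply]⟩
  · rintro ⟨v, hv, rfl⟩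
    exact ⟨v.ofLp, by rwa [euclNorm_eq_norm_toLp],
      by simp [euclNorm_eq_norm_toLp, toLpLin_apply]⟩

lemma matOpNorm_nonneg (A : Matrix α β ℝ) : 0 ≤ matOpNorm A := by
  classical
  exact (matOpNorm_eq_norm A).symm ▸ norm_nonneg _

lemma euclNorm_mulVec_le_matOpNorm_mul (A : Matrix α β ℝ) (v : β → ℝ) :
    euclNorm (A *ᵥ v) ≤ matOpNorm A * euclNorm v := by
  classical
  simpa [matOpNorm_eq_norm, euclNorm_eq_norm_toLp] using
    (toLpLin 2 2 A).toContinuousLinearMap.le_opNorm (WithLp.toLp 2 v)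

end OperatorNorm

namespace Matrix.PosSemidef

variable {ι : Type*} {M : Matrix ι ι ℝ}

lemma isSymm (hM : M.PosSemidef) : M.IsSymm :=
  isHermitian_iff_isSymm.1 hM.isHermitian

variable [Fintype ι]

lemma dotProduct_mulVec_self_nonneg (hM : M.PosSemidef) (u : ι → ℝ) : 0 ≤ u ⬝ᵥ M *ᵥ u := by
  simpa using hM.dotProduct_mulVec_nonneg u

lemma dotProduct_mulVec_sq_le (hM : M.PosSemidef) (u v : ι → ℝ) :
    (u ⬝ᵥ M *ᵥ v) ^ 2 ≤ (u ⬝ᵥ M *ᵥ u) * (v ⬝ᵥ M *ᵥ v) := by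
  classical
  simpa only [toBilin'_apply'] using M.toBilin'.apply_sq_le_of_symm
    (fun x => by simpa only [toBilin'_apply'] using hM.dotProduct_mulVec_self_nonneg x)
    (LinearMap.BilinForm.isSymm_iff.1 <| isSymm_toBilin'_iff_isSymm.2 hM.isSymm) u v

lemma abs_dotProduct_mulVec_le (hM : M.PosSemidef) (u v : ι → ℝ) :
    |u ⬝ᵥ M *ᵥ v| ≤ √(u ⬝ᵥ M *ᵥ u) * √(v ⬝ᵥ M *ᵥ v) := by
  rw [← Real.sqrt_mul (hM.dotProduct_mulVec_self_nonneg u)]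
  exact Real.abs_le_sqrt (hM.dotProduct_mulVec_sq_le u v)

lemma dotProduct_mulVec_le_mul_euclNorm (hM : M.PosSemidef) {μ : ℝ} (hμ : 0 ≤ μ)
    (hle : ∀ x, x ⬝ᵥ M *ᵥ x ≤ μ * (x ⬝ᵥ x)) (u v : ι → ℝ) :
    u ⬝ᵥ M *ᵥ v ≤ μ * (euclNorm u * euclNorm v) := by
  have hsqrt : ∀ x, √(x ⬝ᵥ M *ᵥ x) ≤ √μ * euclNorm x := fun x => by
    rw [euclNorm_eq_sqrt_dotProduct, ← Real.sqrt_mul hμ]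
    exact Real.sqrt_le_sqrt (hle x)
  calc u ⬝ᵥ M *ᵥ v ≤ √(u ⬝ᵥ M *ᵥ u) * √(v ⬝ᵥ M *ᵥ v) :=
        (le_abs_self _).trans (hM.abs_dotProduct_mulVec_le u v)
    _ ≤ (√μ * euclNorm u) * (√μ * euclNorm v) :=
        mul_le_mul (hsqrt u) (hsqrt v) (Real.sqrt_nonneg _)
          (mul_nonneg (Real.sqrt_nonneg _) (euclNorm_nonneg u))
    _ = μ * (euclNorm u * euclNorm v) := by
        rw [mul_mul_mul_comm, Real.mul_self_sqrt hμ]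

lemma euclNorm_mulVec_le_sqrt_trace_mul (hM : M.PosSemidef) (v : ι → ℝ) :
    euclNorm (M *ᵥ v) ≤ √M.trace * √(v ⬝ᵥ M *ᵥ v) := by
  classical
  have hcoord : ∀ i, (M *ᵥ v) i ^ 2 ≤ M i i * (v ⬝ᵥ M *ᵥ v) := fun i => by
    simpa using hM.dotProduct_mulVec_sq_le (Pi.single i 1) v
  rw [euclNorm, ← Real.sqrt_mul hM.trace_nonneg]
  exact Real.sqrt_le_sqrt ((Finset.sum_le_sum fun i _ => hcoord i).trans_eq
    (by rw [trace, Finset.sum_mul]; rfl))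

lemma transpose_sqrt_mul_sqrt [DecidableEq ι]
    {A : Matrix ι ι ℝ} (hA : A.PosSemidef) : hA.sqrtᵀ * hA.sqrt = A := by
  have hU : (star hA.1.eigenvectorUnitary : Matrix ι ι ℝ) * hA.1.eigenvectorUnitary = 1 :=
    Unitary.coe_star_mul_self _
  have hsymm : hA.sqrtᵀ = hA.sqrt := by
    simp [Matrix.PosSemidef.sqrt, transpose_mul, star_eq_conjTranspose, Matrix.mul_assoc]
  have hD : (diagonal ((√·) ∘ hA.1.eigenvalues) : Matrix ι ι ℝ) *
      diagonal ((√·) ∘ hA.1.eigenvalues) = diagonal hA.1.eigenvalues := by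
    rw [diagonal_mul_diagonal]
    exact congrArg diagonal (funext fun i => Real.mul_self_sqrt (hA.eigenvalues_nonneg i))
  rw [hsymm]
  conv_rhs => rw [hA.1.spectral_theorem]
  simp only [Unitary.conjStarAlgAut_apply, Matrix.PosSemidef.sqrt, Matrix.mul_assoc]
  rw [← Matrix.mul_assoc (star _), hU]
  simp [← Matrix.mul_assoc, hD]

end Matrix.PosSemidef

lemma Matrix.IsSymm.dotProduct_mulVec_comm {ι : Type*} [Fintype ι] {M : Matrix ι ι ℝ}
    (hM : M.IsSymm) (u v : ι → ℝ) : u ⬝ᵥ M *ᵥ v = v ⬝ᵥ M *ᵥ u := by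
  conv_lhs => rw [dotProduct_mulVec, ← hM.eq, vecMul_transpose, dotProduct_comm]

lemma loewnerLE.dotProduct_mulVec_le {ι : Type*} [Fintype ι] {A B : Matrix ι ι ℝ}
    (h : loewnerLE A B) (x : ι → ℝ) : x ⬝ᵥ A *ᵥ x ≤ x ⬝ᵥ B *ᵥ x := by
  have := PosSemidef.dotProduct_mulVec_self_nonneg h x
  rwa [sub_mulVec, dotProduct_sub, sub_nonneg] at this

lemma dotProduct_transpose_mul_mul_mulVec {ι κ : Type*} [Fintype ι] [Fintype κ]
    (C : Matrix κ ι ℝ) (M : Matrix κ κ ℝ) (x : ι → ℝ) :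
    x ⬝ᵥ (Cᵀ * M * C) *ᵥ x = (C *ᵥ x) ⬝ᵥ M *ᵥ (C *ᵥ x) := by
  rw [← mulVec_mulVec, ← mulVec_mulVec, dotProduct_mulVec, vecMul_transpose]

lemma dotProduct_smul_one_mulVec {ι : Type*} [Fintype ι] [DecidableEq ι] (μ : ℝ) (x : ι → ℝ) :
    x ⬝ᵥ (μ • (1 : Matrix ι ι ℝ)) *ᵥ x = μ * (x ⬝ᵥ x) := by
  rw [smul_mulVec, one_mulVec, dotProduct_smul, smul_eq_mul]

lemma loewnerLE.transpose_mul_mul {ι κ : Type*} [Fintype ι] [Fintype κ] {A B : Matrix κ κ ℝ}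
    (h : loewnerLE A B) (C : Matrix κ ι ℝ) : loewnerLE (Cᵀ * A * C) (Cᵀ * B * C) := by
  simpa [loewnerLE, Matrix.mul_sub, Matrix.sub_mul] using
    PosSemidef.conjTranspose_mul_mul_same h C

lemma euclNorm_sqrt_mul_mulVec_sq {ι κ : Type*} [Fintype ι] [Fintype κ] [DecidableEq κ]
    {W : Matrix κ κ ℝ} (hW : W.PosSemidef) (C : Matrix κ ι ℝ) (v : ι → ℝ) :
    euclNorm ((hW.sqrt * C) *ᵥ v) ^ 2 = v ⬝ᵥ (Cᵀ * W * C) *ᵥ v := by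
  have h := dotProduct_transpose_mul_mul_mulVec (hW.sqrt * C) 1 v
  rw [Matrix.mul_one, one_mulVec] at h
  rw [euclNorm_sq, ← h, transpose_mul, Matrix.mul_assoc, ← Matrix.mul_assoc hW.sqrtᵀ,
    hW.transpose_sqrt_mul_sqrt, Matrix.mul_assoc]

section IntervalIntegral

variable {ι : Type*} [Fintype ι] {a b : ℝ}

lemma integral_sqrt_mul_sqrt_le {f g : ℝ → ℝ} (hab : a ≤ b) (hf : Continuous f)
    (hg : Continuous g) (hf0 : ∀ t, 0 ≤ f t) (hg0 : ∀ t, 0 ≤ g t) :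
    ∫ t in a..b, √(f t) * √(g t) ≤ √(∫ t in a..b, f t) * √(∫ t in a..b, g t) := by
  set I := ∫ t in a..b, √(f t) * √(g t)
  set A := ∫ t in a..b, f t
  set B := ∫ t in a..b, g t
  have hquad : ∀ ε, 0 ≤ A * (ε * ε) + (-2 * I) * ε + B := fun ε => by
    have hpt : ∀ t, 2 * ε * (√(f t) * √(g t)) ≤ ε ^ 2 * f t + g t := fun t => by
      nlinarith [sq_nonneg (ε * √(f t) - √(g t)), Real.sq_sqrt (hf0 t), Real.sq_sqrt (hg0 t)]
    have hint : 2 * ε * I ≤ ε ^ 2 * A + B := calc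
      2 * ε * I = ∫ t in a..b, 2 * ε * (√(f t) * √(g t)) :=
        (intervalIntegral.integral_const_mul _ _).symm
      _ ≤ ∫ t in a..b, (ε ^ 2 * f t + g t) :=
        intervalIntegral.integral_mono_on hab ((by fun_prop : Continuous _).intervalIntegrable a b)
          ((by fun_prop : Continuous _).intervalIntegrable a b) fun t _ => hpt t
      _ = ε ^ 2 * A + B := by
        rw [intervalIntegral.integral_add ((by fun_prop : Continuous _).intervalIntegrable a b)
          (hg.intervalIntegrable a b), intervalIntegral.integral_const_mul]
    linarith
  have hdisc := discrim_le_zero hquad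
  rw [discrim] at hdisc
  rw [← Real.sqrt_mul (intervalIntegral.integral_nonneg hab fun t _ => hf0 t)]
  exact (le_abs_self I).trans (Real.abs_le_sqrt (by nlinarith))

lemma abs_integral_dotProduct_mulVec_le {S : ℝ → Matrix ι ι ℝ} {u v : ℝ → ι → ℝ} (hab : a ≤ b)
    (hS : Continuous S) (hSpsd : ∀ t, (S t).PosSemidef) (hu : Continuous u) (hv : Continuous v) :
    |∫ t in a..b, u t ⬝ᵥ S t *ᵥ v t| ≤
      √(∫ t in a..b, u t ⬝ᵥ S t *ᵥ u t) * √(∫ t in a..b, v t ⬝ᵥ S t *ᵥ v t) := by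
  have hform : ∀ {u v : ℝ → ι → ℝ}, Continuous u → Continuous v →
      Continuous fun t => u t ⬝ᵥ S t *ᵥ v t := fun hu hv => hu.dotProduct (hS.matrix_mulVec hv)
  calc |∫ t in a..b, u t ⬝ᵥ S t *ᵥ v t|
      ≤ ∫ t in a..b, |u t ⬝ᵥ S t *ᵥ v t| := intervalIntegral.abs_integral_le_integral_abs hab
    _ ≤ ∫ t in a..b, √(u t ⬝ᵥ S t *ᵥ u t) * √(v t ⬝ᵥ S t *ᵥ v t) :=
        intervalIntegral.integral_mono_on hab ((hform hu hv).abs.intervalIntegrable a b)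
          ((by fun_prop : Continuous _).intervalIntegrable a b) fun t _ =>
            (hSpsd t).abs_dotProduct_mulVec_le (u t) (v t)
    _ ≤ _ := integral_sqrt_mul_sqrt_le hab (hform hu hu) (hform hv hv)
        (fun t => (hSpsd t).dotProduct_mulVec_self_nonneg (u t))
        (fun t => (hSpsd t).dotProduct_mulVec_self_nonneg (v t))

lemma dotProduct_intMat_mulVec {F : ℝ → Matrix ι ι ℝ} (hF : Continuous F) (x z : ι → ℝ) :
    x ⬝ᵥ intMat F a b *ᵥ z = ∫ t in a..b, x ⬝ᵥ F t *ᵥ z := by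
  simp only [dotProduct, mulVec, intMat, of_apply, Finset.mul_sum]
  rw [intervalIntegral.integral_finsetSum fun i _ =>
    (by fun_prop : Continuous _).intervalIntegrable a b]
  refine Finset.sum_congr rfl fun i _ => ?_
  rw [intervalIntegral.integral_finsetSum fun j _ =>
    (by fun_prop : Continuous _).intervalIntegrable a b]
  refine Finset.sum_congr rfl fun j _ => ?_
  rw [intervalIntegral.integral_const_mul, intervalIntegral.integral_mul_const]

lemma intMat_transpose_mul_mul {m : Type*} {F : ℝ → Matrix ι ι ℝ}
    (hF : Continuous F) (C : Matrix ι m ℝ) :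
    intMat (fun t => Cᵀ * F t * C) a b = Cᵀ * intMat F a b * C := by
  ext i j
  simp only [intMat, of_apply, mul_apply, transpose_apply]
  rw [intervalIntegral.integral_finsetSum fun k _ =>
    (by fun_prop : Continuous _).intervalIntegrable a b]
  refine Finset.sum_congr rfl fun k _ => ?_
  rw [intervalIntegral.integral_mul_const, intervalIntegral.integral_finsetSum fun l _ =>
    (by fun_prop : Continuous _).intervalIntegrable a b]
  simp only [intervalIntegral.integral_const_mul]

lemma hasDerivAt_dotProduct_mulVec {A : ℝ → Matrix ι ι ℝ} {A' : Matrix ι ι ℝ}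
    {u v : ℝ → ι → ℝ} {u' v' : ι → ℝ} {t : ℝ}
    (hA : ∀ i j, HasDerivAt (fun τ => A τ i j) (A' i j) t)
    (hu : HasDerivAt u u' t) (hv : HasDerivAt v v' t) :
    HasDerivAt (fun τ => u τ ⬝ᵥ A τ *ᵥ v τ)
      (u' ⬝ᵥ A t *ᵥ v t + u t ⬝ᵥ A' *ᵥ v t + u t ⬝ᵥ A t *ᵥ v') t := by
  rw [hasDerivAt_pi] at hu hv
  simp only [dotProduct, mulVec, Finset.mul_sum, ← Finset.sum_add_distrib]
  refine HasDerivAt.fun_sum fun i _ => HasDerivAt.fun_sum fun j _ => ?_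
  exact ((hu i).fun_mul ((hA i j).fun_mul (hv j))).congr_deriv (by ring)

end IntervalIntegral

section Gramian

variable {n : Type*} {S : ℝ → Matrix n n ℝ} {a b : ℝ}

lemma isSymm_intMat (hS : ∀ t, (S t).IsSymm) : (intMat S a b).IsSymm :=
  IsSymm.ext fun i j => intervalIntegral.integral_congr fun t _ => (hS t).apply i j

lemma hasDerivAt_intMat_left (hS : Continuous S) (i j : n) (t : ℝ) :
    HasDerivAt (fun τ => intMat S τ b i j) (-S t i j) t := by
  have hflip : (fun τ => intMat S τ b i j) = fun τ => -∫ s in b..τ, S s i j :=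
    funext fun τ => intervalIntegral.integral_symm _ _
  rw [hflip]
  exact ((by fun_prop : Continuous fun s => S s i j).integral_hasStrictDerivAt b t).hasDerivAt.neg

lemma continuous_intMat_left (hS : Continuous S) : Continuous fun τ => intMat S τ b :=
  continuous_pi fun i => continuous_pi fun j => continuous_iff_continuousAt.2 fun t =>
    (hasDerivAt_intMat_left hS i j t).continuousAt

variable [Fintype n]

lemma posSemidef_intMat (hab : a ≤ b) (hS : Continuous S) (hSpsd : ∀ t, (S t).PosSemidef) :
    (intMat S a b).PosSemidef := by
  refine .of_dotProduct_mulVec_nonneg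
    (isHermitian_iff_isSymm.2 (isSymm_intMat fun t => (hSpsd t).isSymm)) fun x => ?_
  simpa [dotProduct_intMat_mulVec hS] using
    intervalIntegral.integral_nonneg hab fun t _ => (hSpsd t).dotProduct_mulVec_self_nonneg x

/-- Integration by parts against the tail Gramian `∫_t^b S`, which vanishes at `t = b`. -/
lemma integral_dotProduct_mulVec_eq_two_mul_intMat (hS : Continuous S)
    (hSsymm : ∀ t, (S t).IsSymm) {z z' : ℝ → n → ℝ} (hz : ∀ t, HasDerivAt z (z' t) t)
    (hz' : Continuous z') (hz0 : z a = 0) :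
    ∫ t in a..b, z t ⬝ᵥ S t *ᵥ z t = 2 * ∫ t in a..b, z t ⬝ᵥ intMat S t b *ᵥ z' t := by
  have hzc : Continuous z := continuous_iff_continuousAt.2 fun t => (hz t).continuousAt
  have hP := continuous_intMat_left (b := b) hS
  have hderiv : ∀ t, HasDerivAt (fun τ => z τ ⬝ᵥ intMat S τ b *ᵥ z τ)
      (2 * (z t ⬝ᵥ intMat S t b *ᵥ z' t) - z t ⬝ᵥ S t *ᵥ z t) t := fun t =>
    (hasDerivAt_dotProduct_mulVec (A' := -S t) (hasDerivAt_intMat_left hS · · t)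
      (hz t) (hz t)).congr_deriv (by
        rw [(isSymm_intMat hSsymm).dotProduct_mulVec_comm (z' t),
          neg_mulVec, dotProduct_neg]
        ring)
  have hftc := intervalIntegral.integral_eq_sub_of_hasDerivAt (fun t _ => hderiv t)
    ((by fun_prop : Continuous fun t =>
      2 * (z t ⬝ᵥ intMat S t b *ᵥ z' t) - z t ⬝ᵥ S t *ᵥ z t).intervalIntegrable a b)
  have hPb : intMat S b b = 0 := by ext i j; simp [intMat]
  rw [intervalIntegral.integral_sub ((by fun_prop : Continuous _).intervalIntegrable a b)
    ((by fun_prop : Continuous _).intervalIntegrable a b),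
    intervalIntegral.integral_const_mul, hPb, hz0] at hftc
  simp only [zero_mulVec, dotProduct_zero, zero_dotProduct, sub_zero] at hftc
  linarith

lemma two_mul_integral_mul_integral_eq_sq {g : ℝ → ℝ} (hg : Continuous g) :
    2 * ∫ t in a..b, (∫ s in a..t, g s) * g t = (∫ t in a..b, g t) ^ 2 := by
  have hderiv : ∀ t, HasDerivAt (fun τ => (∫ s in a..τ, g s) ^ 2)
      (2 * ((∫ s in a..t, g s) * g t)) t := fun t =>
    ((hg.integral_hasStrictDerivAt a t).hasDerivAt.pow 2).congr_deriv (by ring)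
  rw [← intervalIntegral.integral_const_mul, intervalIntegral.integral_eq_sub_of_hasDerivAt
    (fun t _ => hderiv t) ((by fun_prop : Continuous _).intervalIntegrable a b)]
  simp

lemma integral_dotProduct_mulVec_le_mul_sq_integral_euclNorm (hab : a ≤ b) (hS : Continuous S)
    (hSpsd : ∀ t, (S t).PosSemidef) {μ : ℝ} (hμ : 0 ≤ μ)
    (hUB : ∀ x, ∫ t in a..b, x ⬝ᵥ S t *ᵥ x ≤ μ * (x ⬝ᵥ x)) {z z' : ℝ → n → ℝ}
    (hz : ∀ t, HasDerivAt z (z' t) t) (hz' : Continuous z') (hz0 : z a = 0) :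
    ∫ t in a..b, z t ⬝ᵥ S t *ᵥ z t ≤ μ * (∫ t in a..b, euclNorm (z' t)) ^ 2 := by
  have hzc : Continuous z := continuous_iff_continuousAt.2 fun t => (hz t).continuousAt
  have hnorm : Continuous fun t => euclNorm (z' t) := continuous_euclNorm.comp hz'
  have hlength := intervalIntegral.continuous_primitive
    (fun _ _ => hnorm.intervalIntegrable (μ := volume) _ _) a
  have hP := continuous_intMat_left (b := b) hS
  have hpt : ∀ t ∈ Set.Icc a b, z t ⬝ᵥ intMat S t b *ᵥ z' t
      ≤ μ * ((∫ s in a..t, euclNorm (z' s)) * euclNorm (z' t)) := by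
    rintro t ⟨hat, htb⟩
    have htail : ∀ x, x ⬝ᵥ intMat S t b *ᵥ x ≤ μ * (x ⬝ᵥ x) := fun x => by
      rw [dotProduct_intMat_mulVec hS]
      refine le_trans (intervalIntegral.integral_mono_interval hat htb le_rfl
        (.of_forall fun s => (hSpsd s).dotProduct_mulVec_self_nonneg x)
        ((by fun_prop : Continuous _).intervalIntegrable a b)) (hUB x)
    have hzt : euclNorm (z t) ≤ ∫ s in a..t, euclNorm (z' s) := by
      simpa [hz0] using euclNorm_sub_le_integral hat hz hz'
    refine ((posSemidef_intMat htb hS hSpsd).dotProduct_mulVec_le_mul_euclNorm hμ htail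
      (z t) (z' t)).trans ?_
    exact mul_le_mul_of_nonneg_left (mul_le_mul_of_nonneg_right hzt (euclNorm_nonneg _)) hμ
  calc ∫ t in a..b, z t ⬝ᵥ S t *ᵥ z t = 2 * ∫ t in a..b, z t ⬝ᵥ intMat S t b *ᵥ z' t :=
        integral_dotProduct_mulVec_eq_two_mul_intMat hS (fun t => (hSpsd t).isSymm) hz hz' hz0
    _ ≤ 2 * ∫ t in a..b, μ * ((∫ s in a..t, euclNorm (z' s)) * euclNorm (z' t)) := by
        gcongr
        exact intervalIntegral.integral_mono_on hab
          ((by fun_prop : Continuous _).intervalIntegrable a b)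
          ((by fun_prop : Continuous _).intervalIntegrable a b) hpt
    _ = μ * (∫ t in a..b, euclNorm (z' t)) ^ 2 := by
        rw [intervalIntegral.integral_const_mul, ← two_mul_integral_mul_integral_eq_sq hnorm]
        ring

lemma sqrt_integral_dotProduct_sub_mulVec_le (hab : a ≤ b) (hS : Continuous S)
    (hSpsd : ∀ t, (S t).PosSemidef)
    {u v : ℝ → n → ℝ} (hu : Continuous u) (hv : Continuous v) :
    √(∫ t in a..b, (u t - v t) ⬝ᵥ S t *ᵥ (u t - v t)) ≤
      √(∫ t in a..b, u t ⬝ᵥ S t *ᵥ u t) + √(∫ t in a..b, v t ⬝ᵥ S t *ᵥ v t) := by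
  have hexpand : ∀ t, (u t - v t) ⬝ᵥ S t *ᵥ (u t - v t) =
      u t ⬝ᵥ S t *ᵥ u t - 2 * (u t ⬝ᵥ S t *ᵥ v t) + v t ⬝ᵥ S t *ᵥ v t := fun t => by
    simp only [mulVec_sub, dotProduct_sub, sub_dotProduct,
      (hSpsd t).isSymm.dotProduct_mulVec_comm (v t) (u t)]
    ring
  have hint : ∀ {u v : ℝ → n → ℝ}, Continuous u → Continuous v →
      IntervalIntegrable (fun t => u t ⬝ᵥ S t *ᵥ v t) volume a b := fun hu hv =>
    (hu.dotProduct (hS.matrix_mulVec hv)).intervalIntegrable a b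
  simp only [hexpand]
  rw [intervalIntegral.integral_add ((hint hu hu).sub ((hint hu hv).const_mul 2)) (hint hv hv),
    intervalIntegral.integral_sub (hint hu hu) ((hint hu hv).const_mul 2),
    intervalIntegral.integral_const_mul]
  have hcs := neg_le_abs (∫ t in a..b, u t ⬝ᵥ S t *ᵥ v t) |>.trans
    (abs_integral_dotProduct_mulVec_le hab hS hSpsd hu hv)
  have hA := intervalIntegral.integral_nonneg (μ := volume) hab fun t _ =>
    (hSpsd t).dotProduct_mulVec_self_nonneg (u t)
  have hB := intervalIntegral.integral_nonneg (μ := volume) hab fun t _ =>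
    (hSpsd t).dotProduct_mulVec_self_nonneg (v t)
  rw [Real.sqrt_le_iff]
  refine ⟨by positivity, ?_⟩
  nlinarith [Real.sq_sqrt hA, Real.sq_sqrt hB]

lemma integral_trace_le (hS : Continuous S) {μ : ℝ}
    (hUB : ∀ x, ∫ t in a..b, x ⬝ᵥ S t *ᵥ x ≤ μ * (x ⬝ᵥ x)) :
    ∫ t in a..b, (S t).trace ≤ Fintype.card n * μ := by
  classical
  have hdiag : ∀ i, ∫ t in a..b, S t i i ≤ μ := fun i => by
    simpa using hUB (Pi.single i 1)
  calc ∫ t in a..b, (S t).trace = ∑ i, ∫ t in a..b, S t i i :=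
        intervalIntegral.integral_finsetSum fun i _ =>
          (by fun_prop : Continuous fun t => S t i i).intervalIntegrable a b
    _ ≤ ∑ _i : n, μ := Finset.sum_le_sum fun i _ => hdiag i
    _ = Fintype.card n * μ := by simp

variable {Λ : Matrix n n ℝ} {k : ℝ} {y : ℝ → n → ℝ}

lemma integral_euclNorm_velocity_le (hk : 0 ≤ k) (hab : a ≤ b) (hS : Continuous S)
    (hSpsd : ∀ t, (S t).PosSemidef) {μ : ℝ}
    (hUB : ∀ x, ∫ t in a..b, x ⬝ᵥ S t *ᵥ x ≤ μ * (x ⬝ᵥ x)) (hy : Continuous y) :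
    ∫ t in a..b, euclNorm ((-k) • ((Λ * S t) *ᵥ y t)) ≤
      k * matOpNorm Λ * √(Fintype.card n * μ) * √(∫ t in a..b, y t ⬝ᵥ S t *ᵥ y t) := by
  have hform : Continuous fun t => y t ⬝ᵥ S t *ᵥ y t := hy.dotProduct (hS.matrix_mulVec hy)
  have htrace : Continuous fun t => (S t).trace := by fun_prop
  have hpt : ∀ t, euclNorm ((-k) • ((Λ * S t) *ᵥ y t)) ≤
      k * matOpNorm Λ * (√(S t).trace * √(y t ⬝ᵥ S t *ᵥ y t)) := fun t => by
    rw [euclNorm_smul, abs_neg, abs_of_nonneg hk, ← mulVec_mulVec, mul_assoc]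
    gcongr
    exact (euclNorm_mulVec_le_matOpNorm_mul Λ _).trans
      (mul_le_mul_of_nonneg_left ((hSpsd t).euclNorm_mulVec_le_sqrt_trace_mul (y t))
        (matOpNorm_nonneg Λ))
  calc ∫ t in a..b, euclNorm ((-k) • ((Λ * S t) *ᵥ y t))
      ≤ ∫ t in a..b, k * matOpNorm Λ * (√(S t).trace * √(y t ⬝ᵥ S t *ᵥ y t)) :=
        intervalIntegral.integral_mono_on hab
          ((continuous_euclNorm.comp (by fun_prop)).intervalIntegrable a b)
          ((by fun_prop : Continuous _).intervalIntegrable a b) fun t _ => hpt t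
    _ ≤ k * matOpNorm Λ *
          (√(∫ t in a..b, (S t).trace) * √(∫ t in a..b, y t ⬝ᵥ S t *ᵥ y t)) := by
        rw [intervalIntegral.integral_const_mul]
        gcongr
        · exact mul_nonneg hk (matOpNorm_nonneg Λ)
        · exact integral_sqrt_mul_sqrt_le hab htrace hform (fun t => (hSpsd t).trace_nonneg)
            fun t => (hSpsd t).dotProduct_mulVec_self_nonneg (y t)
    _ ≤ k * matOpNorm Λ * √(Fintype.card n * μ) * √(∫ t in a..b, y t ⬝ᵥ S t *ᵥ y t) := by
        rw [mul_assoc (k * matOpNorm Λ)]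
        gcongr
        · exact mul_nonneg hk (matOpNorm_nonneg Λ)
        · exact integral_trace_le hS hUB

lemma integral_initial_dotProduct_mulVec_le (hk : 0 ≤ k) (hab : a ≤ b) (hS : Continuous S)
    (hSpsd : ∀ t, (S t).PosSemidef) {μ : ℝ} (hμ : 0 ≤ μ)
    (hUB : ∀ x, ∫ t in a..b, x ⬝ᵥ S t *ᵥ x ≤ μ * (x ⬝ᵥ x))
    (hy : ∀ t, HasDerivAt y ((-k) • ((Λ * S t) *ᵥ y t)) t) :
    ∫ t in a..b, y a ⬝ᵥ S t *ᵥ y a ≤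
      (1 + k * √(Fintype.card n) * matOpNorm Λ * μ) ^ 2 * ∫ t in a..b, y t ⬝ᵥ S t *ᵥ y t := by
  have hyc : Continuous y := continuous_iff_continuousAt.2 fun t => (hy t).continuousAt
  set c := k * √(Fintype.card n) * matOpNorm Λ * μ
  set J := ∫ t in a..b, y t ⬝ᵥ S t *ᵥ y t
  set H := ∫ t in a..b, (y t - y a) ⬝ᵥ S t *ᵥ (y t - y a)
  have hc : 0 ≤ c := by have := matOpNorm_nonneg Λ; positivity
  have hJ : 0 ≤ J := intervalIntegral.integral_nonneg hab fun t _ =>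
    (hSpsd t).dotProduct_mulVec_self_nonneg (y t)
  have hH : H ≤ c ^ 2 * J := by
    refine (integral_dotProduct_mulVec_le_mul_sq_integral_euclNorm hab hS hSpsd hμ hUB
      (fun t => (hy t).sub_const (y a)) (by fun_prop) (sub_self _)).trans ?_
    have hvel := integral_euclNorm_velocity_le (Λ := Λ) hk hab hS hSpsd hUB hyc
    calc μ * (∫ t in a..b, euclNorm ((-k) • ((Λ * S t) *ᵥ y t))) ^ 2
        ≤ μ * (k * matOpNorm Λ * √(Fintype.card n * μ) * √J) ^ 2 := by
          gcongr
          exact intervalIntegral.integral_nonneg hab fun t _ => euclNorm_nonneg _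
      _ = c ^ 2 * J := by
          simp only [c, mul_pow, Real.sq_sqrt hJ, Real.sq_sqrt (Nat.cast_nonneg _),
            Real.sq_sqrt (mul_nonneg (Nat.cast_nonneg _) hμ)]
          ring
  have hsqrtH : √H ≤ c * √J := by
    rw [← Real.sqrt_sq hc, ← Real.sqrt_mul (sq_nonneg c)]
    exact Real.sqrt_le_sqrt hH
  have htri := sqrt_integral_dotProduct_sub_mulVec_le (v := fun t => y t - y a) hab hS hSpsd hyc
    (by fun_prop)
  simp only [sub_sub_cancel] at htri
  calc ∫ t in a..b, y a ⬝ᵥ S t *ᵥ y a = √(∫ t in a..b, y a ⬝ᵥ S t *ᵥ y a) ^ 2 :=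
        (Real.sq_sqrt (intervalIntegral.integral_nonneg hab fun t _ =>
          (hSpsd t).dotProduct_mulVec_self_nonneg (y a))).symm
    _ ≤ ((1 + c) * √J) ^ 2 := by gcongr; linarith
    _ = (1 + c) ^ 2 * J := by rw [mul_pow, Real.sq_sqrt hJ]

variable [DecidableEq n]

/-- The Lyapunov function `(y - y a)ᵀ Λ⁻¹ (y - y a)` decreases at rate `2k (y - y a)ᵀ S y`. -/
lemma integral_dotProduct_sub_mulVec_nonpos (hk : 0 < k) (hΛ : Λ.PosDef) (hS : Continuous S)
    (hy : ∀ t, HasDerivAt y ((-k) • ((Λ * S t) *ᵥ y t)) t) :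
    ∫ t in a..b, (y t - y a) ⬝ᵥ S t *ᵥ y t ≤ 0 := by
  have hyc : Continuous y := continuous_iff_continuousAt.2 fun t => (hy t).continuousAt
  have hinv : Λ⁻¹ * Λ = 1 := nonsing_inv_mul Λ ((isUnit_iff_isUnit_det Λ).1 hΛ.isUnit)
  have hderiv : ∀ t, HasDerivAt (fun τ => (y τ - y a) ⬝ᵥ Λ⁻¹ *ᵥ (y τ - y a))
      (-(2 * k) * ((y t - y a) ⬝ᵥ S t *ᵥ y t)) t := fun t => by
    have h := hasDerivAt_dotProduct_mulVec (A := fun _ => Λ⁻¹) (A' := 0)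
      (fun _ _ => hasDerivAt_const _ _) ((hy t).sub_const (y a)) ((hy t).sub_const (y a))
    refine h.congr_deriv ?_
    rw [hΛ.inv.posSemidef.isSymm.dotProduct_mulVec_comm _ (y t - y a), mulVec_smul,
      mulVec_mulVec, ← Matrix.mul_assoc, hinv, Matrix.one_mul]
    simp only [zero_mulVec, dotProduct_zero, dotProduct_smul, smul_eq_mul]
    ring
  have hftc := intervalIntegral.integral_eq_sub_of_hasDerivAt (fun t _ => hderiv t)
    ((by fun_prop : Continuous fun t =>
      -(2 * k) * ((y t - y a) ⬝ᵥ S t *ᵥ y t)).intervalIntegrable a b)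
  simp only [intervalIntegral.integral_const_mul, sub_self, mulVec_zero, dotProduct_zero,
    sub_zero] at hftc
  nlinarith [hΛ.inv.posSemidef.dotProduct_mulVec_self_nonneg (y b - y a)]

lemma integral_dotProduct_mulVec_le_initial (hk : 0 < k) (hΛ : Λ.PosDef) (hab : a ≤ b)
    (hS : Continuous S) (hSpsd : ∀ t, (S t).PosSemidef)
    (hy : ∀ t, HasDerivAt y ((-k) • ((Λ * S t) *ᵥ y t)) t) :
    ∫ t in a..b, y t ⬝ᵥ S t *ᵥ y t ≤ ∫ t in a..b, y a ⬝ᵥ S t *ᵥ y a := by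
  have hyc : Continuous y := continuous_iff_continuousAt.2 fun t => (hy t).continuousAt
  set J := ∫ t in a..b, y t ⬝ᵥ S t *ᵥ y t
  set G := ∫ t in a..b, y a ⬝ᵥ S t *ᵥ y a
  have hcross := integral_dotProduct_sub_mulVec_nonpos (a := a) (b := b) hk hΛ hS hy
  simp only [sub_dotProduct] at hcross
  rw [intervalIntegral.integral_sub ((by fun_prop : Continuous _).intervalIntegrable a b)
    ((by fun_prop : Continuous _).intervalIntegrable a b)] at hcross
  have hcs := (le_abs_self _).trans
    (abs_integral_dotProduct_mulVec_le hab hS hSpsd (continuous_const (y := y a)) hyc)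
  have hJ : 0 ≤ J := intervalIntegral.integral_nonneg hab fun t _ =>
    (hSpsd t).dotProduct_mulVec_self_nonneg (y t)
  have hG : 0 ≤ G := intervalIntegral.integral_nonneg hab fun t _ =>
    (hSpsd t).dotProduct_mulVec_self_nonneg (y a)
  -- `J ≤ √G √J` forces `J ≤ G`
  nlinarith [Real.sq_sqrt hJ, Real.sq_sqrt hG, Real.sqrt_nonneg J, Real.sqrt_nonneg G,
    sq_nonneg (√J - √G)]

theorem observability_gramian_bounds (hk : 0 < k) (hΛ : Λ.PosDef) (hab : a ≤ b)
    (hS : Continuous S) (hSpsd : ∀ t, (S t).PosSemidef) {μ₁ μ₂ : ℝ} (hμ₂ : 0 ≤ μ₂)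
    (hPE : loewnerLE (μ₁ • 1) (intMat S a b)) (hUB : loewnerLE (intMat S a b) (μ₂ • 1))
    (hy : ∀ t, HasDerivAt y ((-k) • ((Λ * S t) *ᵥ y t)) t) :
    μ₁ / (1 + k * √(Fintype.card n) * matOpNorm Λ * μ₂) ^ 2 * (y a ⬝ᵥ y a) ≤
        ∫ t in a..b, y t ⬝ᵥ S t *ᵥ y t ∧
      ∫ t in a..b, y t ⬝ᵥ S t *ᵥ y t ≤ μ₂ * (y a ⬝ᵥ y a) := by
  have hPE' : ∀ x, μ₁ * (x ⬝ᵥ x) ≤ ∫ t in a..b, x ⬝ᵥ S t *ᵥ x := fun x => by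
    simpa only [dotProduct_smul_one_mulVec, dotProduct_intMat_mulVec hS] using
      hPE.dotProduct_mulVec_le x
  have hUB' : ∀ x, ∫ t in a..b, x ⬝ᵥ S t *ᵥ x ≤ μ₂ * (x ⬝ᵥ x) := fun x => by
    simpa only [dotProduct_smul_one_mulVec, dotProduct_intMat_mulVec hS] using
      hUB.dotProduct_mulVec_le x
  have hc : 0 < (1 + k * √(Fintype.card n) * matOpNorm Λ * μ₂) ^ 2 := by
    have := matOpNorm_nonneg Λ; positivity
  refine ⟨?_, (integral_dotProduct_mulVec_le_initial hk hΛ hab hS hSpsd hy).trans (hUB' _)⟩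
  rw [div_mul_eq_mul_div, div_le_iff₀ hc, mul_comm _ (_ ^ 2)]
  exact (hPE' _).trans (integral_initial_dotProduct_mulVec_le hk.le hab hS hSpsd hμ₂ hUB' hy)

end Gramian

theorem stmt7_general (p q : ℕ) (k : ℝ) (hk : 0 < k)
    (d : Fin p → ℝ) (hd : ∀ i, 0 < d i)
    (Λ : Matrix (Fin p) (Fin p) ℝ) (hΛ : Λ = Matrix.diagonal d)
    (Γ : Matrix (Fin p) (Fin p) ℝ) (hΓ : Γᵀ * Γ = 1)
    (R : Matrix (Fin p) (Fin p ⊕ Fin q) ℝ)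
    (W : ℝ → Matrix (Fin p ⊕ Fin q) (Fin p ⊕ Fin q) ℝ)
    (hWcont : Continuous W)
    (hWpsd : ∀ t, (W t).PosSemidef)
    (T₀ μ₁ μ₂ : ℝ) (hT₀ : 0 < T₀) (hμ₁ : 0 < μ₁) (hμ₁₂ : μ₁ ≤ μ₂)
    (hPE : ∀ t : ℝ, 0 ≤ t →
      loewnerLE (μ₁ • (1 : Matrix (Fin p) (Fin p) ℝ))
        (intMat (fun τ => R * W τ * Rᵀ) t (t + T₀)))
    (hUB : ∀ t : ℝ, 0 ≤ t →
      loewnerLE (intMat (fun τ => R * W τ * Rᵀ) t (t + T₀))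
        (μ₂ • (1 : Matrix (Fin p) (Fin p) ℝ))) :
    ∀ t₀ : ℝ, 0 ≤ t₀ → ∀ y : ℝ → Fin p → ℝ,
      (∀ t : ℝ, HasDerivAt y ((-k) • (Λ * Γᵀ * R * W t * Rᵀ * Γ).mulVec (y t)) t) →
      (μ₁ / (1 + k * Real.sqrt p * matOpNorm Λ * μ₂) ^ 2) * euclNorm (y t₀) ^ 2 ≤
        (∫ τ in t₀..(t₀ + T₀), euclNorm (((hWpsd τ).sqrt * Rᵀ * Γ).mulVec (y τ)) ^ 2) ∧
      (∫ τ in t₀..(t₀ + T₀), euclNorm (((hWpsd τ).sqrt * Rᵀ * Γ).mulVec (y τ)) ^ 2) ≤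
        (μ₂ * Real.exp (k ^ 2 * p * matOpNorm Λ ^ 2 * μ₂ ^ 2)) * euclNorm (y t₀) ^ 2 := by
  intro t₀ ht₀ y hy
  have hμ₂ : 0 ≤ μ₂ := hμ₁.le.trans hμ₁₂
  set C := Rᵀ * Γ
  set S : ℝ → Matrix (Fin p) (Fin p) ℝ := fun τ => Cᵀ * W τ * C
  have hS : Continuous S := by fun_prop
  have hSpsd : ∀ τ, (S τ).PosSemidef := fun τ => by
    simpa using (hWpsd τ).conjTranspose_mul_mul_same C
  have hwindow : intMat S t₀ (t₀ + T₀) =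
      Γᵀ * intMat (fun τ => R * W τ * Rᵀ) t₀ (t₀ + T₀) * Γ := by
    rw [← intMat_transpose_mul_mul (by fun_prop)]
    simp [S, C, transpose_mul, Matrix.mul_assoc]
  have hscalar : ∀ μ : ℝ, Γᵀ * (μ • 1) * Γ = μ • 1 := by simp [hΓ]
  obtain ⟨hlow, hup⟩ := observability_gramian_bounds (Λ := Λ) hk (hΛ ▸ .diagonal hd)
    (le_add_of_nonneg_right hT₀.le) hS hSpsd hμ₂
    (hwindow ▸ hscalar μ₁ ▸ (hPE t₀ ht₀).transpose_mul_mul Γ)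
    (hwindow ▸ hscalar μ₂ ▸ (hUB t₀ ht₀).transpose_mul_mul Γ)
    (by simpa [S, C, transpose_mul, Matrix.mul_assoc] using hy)
  simp only [Matrix.mul_assoc _ Rᵀ Γ, euclNorm_sqrt_mul_mulVec_sq]
  simp only [euclNorm_sq, Fintype.card_fin] at hlow hup ⊢
  refine ⟨hlow, hup.trans ?_⟩
  rw [mul_right_comm]
  exact le_mul_of_one_le_right (mul_nonneg hμ₂ (by rw [← euclNorm_sq]; positivity))
    (Real.one_le_exp (by positivity))

/-- Uniform complete observability Gramian bounds for the closed-loop spanning-tree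
edge dynamics `ẏ = -k Λ Γᵀ R W(t) Rᵀ Γ y` with output matrix `C(t) = W(t)^{1/2} Rᵀ Γ`. -/
theorem stmt7 (p q : ℕ) (hp : 0 < p) (k : ℝ) (hk : 0 < k)
    (d : Fin p → ℝ) (hd : ∀ i, 0 < d i)
    (Λ : Matrix (Fin p) (Fin p) ℝ) (hΛ : Λ = Matrix.diagonal d)
    (Γ : Matrix (Fin p) (Fin p) ℝ) (hΓ : Γᵀ * Γ = 1)
    (T : Matrix (Fin p) (Fin q) ℝ)
    (R : Matrix (Fin p) (Fin p ⊕ Fin q) ℝ) (hR : R = Matrix.fromCols 1 T)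
    (W : ℝ → Matrix (Fin p ⊕ Fin q) (Fin p ⊕ Fin q) ℝ)
    (hWcont : Continuous W)
    (hWdiag : ∀ t, (W t).IsDiag)
    (hWpsd : ∀ t, (W t).PosSemidef)
    (T₀ μ₁ μ₂ : ℝ) (hT₀ : 0 < T₀) (hμ₁ : 0 < μ₁) (hμ₁₂ : μ₁ ≤ μ₂)
    (hPE : ∀ t : ℝ, 0 ≤ t →
      loewnerLE (μ₁ • (1 : Matrix (Fin p) (Fin p) ℝ))
        (intMat (fun τ => R * W τ * Rᵀ) t (t + T₀)))
    (hUB : ∀ t : ℝ, 0 ≤ t →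
      loewnerLE (intMat (fun τ => R * W τ * Rᵀ) t (t + T₀))
        (μ₂ • (1 : Matrix (Fin p) (Fin p) ℝ))) :
    ∀ t₀ : ℝ, 0 ≤ t₀ → ∀ y : ℝ → Fin p → ℝ,
      (∀ t : ℝ, HasDerivAt y ((-k) • (Λ * Γᵀ * R * W t * Rᵀ * Γ).mulVec (y t)) t) →
      (μ₁ / (1 + k * Real.sqrt p * matOpNorm Λ * μ₂) ^ 2) * euclNorm (y t₀) ^ 2 ≤
        (∫ τ in t₀..(t₀ + T₀), euclNorm (((hWpsd τ).sqrt * Rᵀ * Γ).mulVec (y τ)) ^ 2) ∧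
      (∫ τ in t₀..(t₀ + T₀), euclNorm (((hWpsd τ).sqrt * Rᵀ * Γ).mulVec (y τ)) ^ 2) ≤
        (μ₂ * Real.exp (k ^ 2 * p * matOpNorm Λ ^ 2 * μ₂ ^ 2)) * euclNorm (y t₀) ^ 2 :=
  stmt7_general p q k hk d hd Λ hΛ Γ hΓ R W hWcont hWpsd T₀ μ₁ μ₂ hT₀ hμ₁ hμ₁₂ hPE hUB
end

section
/- Let D_T be a real n × p matrix, T a real p × (m − p) matrix, and let D = [D_T | D_T·T] be the n × m block matrix. Let R = [1 | T] be the p × m matrix whose first p columns form the identity. Then for every m × m real matrix W, the identity D_Tᵀ ⬝ D ⬝ W ⬝ Dᵀ = (D_Tᵀ ⬝ D_T) ⬝ R ⬝ W ⬝ Rᵀ ⬝ D_Tᵀ holds. Consequently, if x : ℝ → (Fin n → ℝ) is differentiable with x'(t) = −k • (D ⬝ W(t) ⬝ Dᵀ).mulVec(x t), then the spanning-tree edge state x_T(t) = D_Tᵀ.mulVec(x t) satisfies x_T'(t) = −k • ((D_Tᵀ ⬝ D_T) ⬝ R ⬝ W(t) ⬝ Rᵀ).mulVec(x_T t). -/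
open Matrix

/-! Writing `D = D_T R` (the cycle columns are `D_T T`), the edge Laplacian factors through
`D_Tᵀ`: `D_Tᵀ (D W Dᵀ) = (D_Tᵀ D_T R W Rᵀ) D_Tᵀ`. A matrix `P` intertwining `M` with `N` in
this way sends solutions of `ẋ = c M x` to solutions of `ẏ = c N y` via `y = P x`. -/

namespace Matrix

variable {α : Type*} {l m n o : Type*} [Fintype m]

theorem fromCols_self_mul_eq_mul_fromCols_one [DecidableEq m] [Semiring α]
    (A : Matrix l m α) (T : Matrix m n α) :
    fromCols A (A * T) = A * fromCols 1 T := by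
  rw [mul_fromCols, Matrix.mul_one]

theorem transpose_mul_mul_mul_transpose_of_eq_mul [CommSemiring α] [Fintype l]
    [Fintype o] {A : Matrix l m α} {R : Matrix m o α} {D : Matrix l o α} (hD : D = A * R)
    (W : Matrix o o α) :
    Aᵀ * D * W * Dᵀ = Aᵀ * A * R * W * Rᵀ * Aᵀ := by
  rw [hD, transpose_mul]
  simp only [Matrix.mul_assoc]

theorem hasDerivAt_mulVec [Fintype n] {x : ℝ → n → ℝ} {v : n → ℝ} {t : ℝ} (P : Matrix m n ℝ)
    (hx : HasDerivAt x v t) :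
    HasDerivAt (fun s => P *ᵥ x s) (P *ᵥ v) t :=
  (mulVecLin P).toContinuousLinearMap.hasFDerivAt.comp_hasDerivAt t hx

theorem hasDerivAt_mulVec_of_mul_eq_mul [Fintype n] {x : ℝ → n → ℝ} {t c : ℝ} {P : Matrix m n ℝ}
    {M : Matrix n n ℝ} {N : Matrix m m ℝ} (hPMN : P * M = N * P)
    (hx : HasDerivAt x (c • M *ᵥ x t) t) :
    HasDerivAt (fun s => P *ᵥ x s) (c • N *ᵥ (P *ᵥ x t)) t := by
  convert hasDerivAt_mulVec P hx using 1
  rw [mulVec_smul, mulVec_mulVec, mulVec_mulVec, hPMN]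

end Matrix

/-- The identity `D_Tᵀ D W Dᵀ = (D_Tᵀ D_T) R W Rᵀ D_Tᵀ` for `D = [D_T | D_T T]` and
`R = [1 | T]`, and the resulting spanning-tree edge dynamics. -/
theorem stmt11 (n p q : ℕ)
    (DT : Matrix (Fin n) (Fin p) ℝ)
    (T : Matrix (Fin p) (Fin q) ℝ)
    (D : Matrix (Fin n) (Fin p ⊕ Fin q) ℝ)
    (hD : D = Matrix.fromCols DT (DT * T))
    (R : Matrix (Fin p) (Fin p ⊕ Fin q) ℝ) (hR : R = Matrix.fromCols 1 T) :
    (∀ W : Matrix (Fin p ⊕ Fin q) (Fin p ⊕ Fin q) ℝ,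
      DTᵀ * D * W * Dᵀ = (DTᵀ * DT) * R * W * Rᵀ * DTᵀ) ∧
    ∀ (W : ℝ → Matrix (Fin p ⊕ Fin q) (Fin p ⊕ Fin q) ℝ) (k : ℝ) (x : ℝ → Fin n → ℝ),
      (∀ t : ℝ, HasDerivAt x ((-k) • (D * W t * Dᵀ).mulVec (x t)) t) →
      ∀ t : ℝ,
        HasDerivAt (fun s => DTᵀ.mulVec (x s))
          ((-k) • ((DTᵀ * DT) * R * W t * Rᵀ).mulVec (DTᵀ.mulVec (x t))) t := by
  have hDR : D = DT * R := by
    rw [hD, hR, fromCols_self_mul_eq_mul_fromCols_one]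
  have key := fun W => transpose_mul_mul_mul_transpose_of_eq_mul hDR W
  refine ⟨key, fun W k x hx t => hasDerivAt_mulVec_of_mul_eq_mul ?_ (hx t)⟩
  simpa only [Matrix.mul_assoc] using key (W t)
end

section
/- Let g : ℝ → ℝ be measurable, integrable on compact intervals, and consider the scalar time-varying system whose solutions x : ℝ → ℝ satisfy x(t) = x(t₀)·exp(−∫_{t₀}^t g(τ)² dτ) for t ≥ t₀ (the solutions of ẋ = −g(t)²x). Then the following are equivalent: (i) g is persistently exciting, i.e. there exist μ₁ > 0 and T₀ > 0 with ∫_t^{t+T₀} g(τ)² dτ ≥ μ₁ for all t ≥ 0; (ii) the origin is uniformly exponentially stable, i.e. there exist M ≥ 1 and λ > 0 such that |x(t)| ≤ M·exp(−λ·(t − t₀))·|x(t₀)| for all t ≥ t₀ ≥ 0 and all solutions x. -/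
open MeasureTheory

/-- Morgan–Narendra: for the scalar system `ẋ = -g(t)² x` (solutions
`x(t) = x(t₀) exp(-∫_{t₀}^t g²)`), persistence of excitation of `g` is equivalent to
uniform exponential stability of the origin. -/
theorem stmt14 (g : ℝ → ℝ) (hmeas : Measurable g)
    (hint : MeasureTheory.LocallyIntegrable (fun t => g t ^ 2) MeasureTheory.volume) :
    (∃ μ₁ T₀ : ℝ, 0 < μ₁ ∧ 0 < T₀ ∧
      ∀ t : ℝ, 0 ≤ t → μ₁ ≤ ∫ τ in t..(t + T₀), g τ ^ 2) ↔
    (∃ M lam : ℝ, 1 ≤ M ∧ 0 < lam ∧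
      ∀ x : ℝ → ℝ,
        (∀ t₀ t : ℝ, t₀ ≤ t → x t = x t₀ * Real.exp (-∫ τ in t₀..t, g τ ^ 2)) →
        ∀ t₀ t : ℝ, 0 ≤ t₀ → t₀ ≤ t →
          |x t| ≤ M * Real.exp (-lam * (t - t₀)) * |x t₀|) := by
  have hII : ∀ a b : ℝ, IntervalIntegrable (fun t => g t ^ 2) volume a b := by
    intro a b
    exact intervalIntegrable_iff.2
      ((hint.integrableOn_isCompact isCompact_uIcc).mono_set Set.uIoc_subset_uIcc)
  have hnn : ∀ a b : ℝ, a ≤ b → 0 ≤ ∫ τ in a..b, g τ ^ 2 := by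
    intro a b hab
    exact intervalIntegral.integral_nonneg hab (fun τ _ => sq_nonneg _)
  constructor
  · rintro ⟨μ₁, T₀, hμ, hT, hPE⟩
    refine ⟨Real.exp μ₁, μ₁ / T₀, Real.one_le_exp hμ.le, div_pos hμ hT, ?_⟩
    intro x hx t₀ t ht₀ ht
    -- lower bound on the integral via repeated windows
    have key : ∀ n : ℕ, ∀ s : ℝ, 0 ≤ s → (n : ℝ) * μ₁ ≤ ∫ τ in s..(s + n * T₀), g τ ^ 2 := by
      intro n
      induction n with
      | zero => intro s hs; simp
      | succ n ih =>
        intro s hs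
        have hsplit : (∫ τ in s..(s + n * T₀), g τ ^ 2)
            + ∫ τ in (s + n * T₀)..(s + (n + 1 : ℕ) * T₀), g τ ^ 2
            = ∫ τ in s..(s + (n + 1 : ℕ) * T₀), g τ ^ 2 :=
          intervalIntegral.integral_add_adjacent_intervals (hII _ _) (hII _ _)
        have h2 : μ₁ ≤ ∫ τ in (s + n * T₀)..(s + (n + 1 : ℕ) * T₀), g τ ^ 2 := by
          have : s + (n + 1 : ℕ) * T₀ = (s + n * T₀) + T₀ := by push_cast; ring
          rw [this]
          exact hPE _ (by nlinarith [hs, hT.le, Nat.cast_nonneg (α := ℝ) n])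
        have h1 := ih s hs
        push_cast at hsplit h2 ⊢
        linarith
    set n := ⌊(t - t₀) / T₀⌋₊ with hn
    have hfl : (n : ℝ) ≤ (t - t₀) / T₀ := Nat.floor_le (div_nonneg (by linarith) hT.le)
    have hfl2 : (t - t₀) / T₀ < (n : ℝ) + 1 := Nat.lt_floor_add_one _
    have hle : t₀ + n * T₀ ≤ t := by
      have := (le_div_iff₀ hT).1 hfl
      linarith
    have hI1 : (n : ℝ) * μ₁ ≤ ∫ τ in t₀..(t₀ + n * T₀), g τ ^ 2 := key n t₀ ht₀
    have hsplit : (∫ τ in t₀..(t₀ + n * T₀), g τ ^ 2)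
        + ∫ τ in (t₀ + n * T₀)..t, g τ ^ 2 = ∫ τ in t₀..t, g τ ^ 2 :=
      intervalIntegral.integral_add_adjacent_intervals (hII _ _) (hII _ _)
    have hI : (n : ℝ) * μ₁ ≤ ∫ τ in t₀..t, g τ ^ 2 := by
      have := hnn _ _ hle
      linarith
    have hIbound : μ₁ / T₀ * (t - t₀) - μ₁ ≤ ∫ τ in t₀..t, g τ ^ 2 := by
      have h3 : (t - t₀) / T₀ * μ₁ - μ₁ ≤ (n : ℝ) * μ₁ := by nlinarith
      have : μ₁ / T₀ * (t - t₀) = (t - t₀) / T₀ * μ₁ := by ring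
      linarith
    rw [hx t₀ t ht]
    rw [abs_mul, abs_of_nonneg (Real.exp_pos _).le]
    have hexp : Real.exp (-∫ τ in t₀..t, g τ ^ 2)
        ≤ Real.exp μ₁ * Real.exp (-(μ₁ / T₀) * (t - t₀)) := by
      rw [← Real.exp_add]
      exact Real.exp_le_exp.2 (by linarith)
    calc |x t₀| * Real.exp (-∫ τ in t₀..t, g τ ^ 2)
        ≤ |x t₀| * (Real.exp μ₁ * Real.exp (-(μ₁ / T₀) * (t - t₀))) :=
          mul_le_mul_of_nonneg_left hexp (abs_nonneg _)
      _ = Real.exp μ₁ * Real.exp (-(μ₁ / T₀) * (t - t₀)) * |x t₀| := by ring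
  · rintro ⟨M, lam, hM, hlam, hUES⟩
    have hM0 : 0 < M := lt_of_lt_of_le one_pos hM
    have hlog : 0 ≤ Real.log M := Real.log_nonneg hM
    refine ⟨1, (Real.log M + 1) / lam, one_pos,
      div_pos (by linarith) hlam, ?_⟩
    intro t ht
    set T₀ := (Real.log M + 1) / lam with hT₀
    have hT₀pos : 0 < T₀ := div_pos (by linarith) hlam
    -- the canonical solution
    set x : ℝ → ℝ := fun s => Real.exp (-∫ τ in (0:ℝ)..s, g τ ^ 2) with hxdef
    have hx : ∀ t₀ t : ℝ, t₀ ≤ t → x t = x t₀ * Real.exp (-∫ τ in t₀..t, g τ ^ 2) := by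
      intro a b hab
      simp only [hxdef]
      rw [← Real.exp_add]
      congr 1
      have : (∫ τ in (0:ℝ)..a, g τ ^ 2) + ∫ τ in a..b, g τ ^ 2
          = ∫ τ in (0:ℝ)..b, g τ ^ 2 :=
        intervalIntegral.integral_add_adjacent_intervals (hII _ _) (hII _ _)
      linarith
    have h := hUES x hx t (t + T₀) ht (by linarith)
    rw [hx t (t + T₀) (by linarith)] at h
    have hxpos : 0 < x t := Real.exp_pos _
    rw [abs_mul, abs_of_pos hxpos, abs_of_nonneg (Real.exp_pos _).le] at h
    have h' : Real.exp (-∫ τ in t..(t + T₀), g τ ^ 2)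
        ≤ M * Real.exp (-lam * (t + T₀ - t)) := by
      have := mul_le_mul_of_nonneg_left h (le_of_lt (inv_pos.2 hxpos))
      rw [mul_comm (x t)] at this
      calc Real.exp (-∫ τ in t..(t + T₀), g τ ^ 2)
          = (x t)⁻¹ * (Real.exp (-∫ τ in t..(t + T₀), g τ ^ 2) * x t) := by
            field_simp
        _ ≤ (x t)⁻¹ * (M * Real.exp (-lam * (t + T₀ - t)) * x t) := this
        _ = M * Real.exp (-lam * (t + T₀ - t)) * ((x t)⁻¹ * x t) := by ring
        _ = M * Real.exp (-lam * (t + T₀ - t)) := by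
            rw [inv_mul_cancel₀ hxpos.ne', mul_one]
    have hsimp : M * Real.exp (-lam * (t + T₀ - t)) = Real.exp (-1) := by
      have h1 : lam * T₀ = Real.log M + 1 := by
        rw [hT₀]; field_simp
      have : -lam * (t + T₀ - t) = -(lam * T₀) := by ring
      rw [this, h1]
      rw [← Real.exp_log hM0, ← Real.exp_add]
      congr 1
      rw [Real.log_exp]
      ring
    rw [hsimp] at h'
    have := Real.exp_le_exp.1 h'
    linarith
end
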